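/- The sum over f from 0 to h of (h!/(h−f)!) · Σ_{ν ∈ {0,1}^h with exactly f zeros} Δ(ν) equals (h+1)^h, where Δ(ν) = ∏_{t=1}^h (1 + φ_t(ν)). -/
import Mathlib


open Finset
open scoped Classical

/-- Stirling numbers of the second kind. -/
def stirling : ℕ → ℕ → ℕ
  | 0, 0 => 1
  | 0, _ + 1 => 0
  | _ + 1, 0 => 0
  | n + 1, k + 1 => (k + 1) * stirling n (k + 1) + stirling n k

/-- Bell numbers. -/
def bellNum (n : ℕ) : ℕ := ∑ k ∈ Finset.range (n + 1), stirling n k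

/-- A TL-state of length `h`: `ν t = 0` means no ball lands at (1-based) time `t+1`;
otherwise `ν t` is the airtime of the ball landing at time `t+1`, which must be `≥ t+1`,
and no two balls were thrown at the same instant. -/
def IsTL (h : ℕ) (ν : Fin h → Fin (h + 1)) : Prop :=
  (∀ t : Fin h, (ν t : ℕ) = 0 ∨ t.val + 1 ≤ (ν t : ℕ)) ∧
  ∀ j k : Fin h, j ≠ k → (ν j : ℕ) ≠ 0 → (ν k : ℕ) ≠ 0 →
    (ν j : ℕ) + k.val ≠ (ν k : ℕ) + j.val

/-- Number of empty slots of a TL-state. -/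
def tlZeros {h : ℕ} (ν : Fin h → Fin (h + 1)) : ℕ :=
  (Finset.univ.filter (fun t : Fin h => (ν t : ℕ) = 0)).card

/-- Number of zeros of a landing state. -/
def numZeros {h : ℕ} (ν : Fin h → Bool) : ℕ :=
  (Finset.univ.filter (fun t : Fin h => ν t = false)).card

/-- `φ_t(ν)` (with `t : Fin h` representing 1-based time `t+1`). -/
def phi {h : ℕ} (ν : Fin h → Bool) (t : Fin h) : ℕ :=
  if ν t = true then
    (Finset.univ.filter (fun j : Fin h => t < j ∧ ν j = false)).card
  else 0

/-- The weight `Δ(ν)`. -/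
def Delta {h : ℕ} (ν : Fin h → Bool) : ℕ := ∏ t : Fin h, (1 + phi ν t)

/-- 1-based access to a landing state, `false` out of range (convention `ν_t = 0` for `t > h`). -/
def getB {h : ℕ} (ν : Fin h → Bool) (j : ℕ) : Bool :=
  if hj : 1 ≤ j ∧ j ≤ h then ν ⟨j - 1, by omega⟩ else false

/-- Throwing operator on landing states: `theta 0` is the left shift (wait), and for
`1 ≤ j`, `theta j` shifts left and places a ball at 1-based position `j`. -/
def theta {h : ℕ} (j : ℕ) (ν : Fin h → Bool) : Fin h → Bool :=
  fun t => if t.val + 1 = j then true else getB ν (t.val + 2)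

/-- 1-based access to a TL-state given as a ℕ-valued tuple, `0` out of range. -/
def getN {h : ℕ} (ν : Fin h → ℕ) (j : ℕ) : ℕ :=
  if hj : 1 ≤ j ∧ j ≤ h then ν ⟨j - 1, by omega⟩ else 0

/-- Throwing operator on ℕ-valued TL-states. -/
def thetaN {h : ℕ} (j : ℕ) (ν : Fin h → ℕ) : Fin h → ℕ :=
  fun t => if t.val + 1 = j then j else getN ν (t.val + 2)

/-- Transition probabilities for the standard juggling chain on landing states. -/
noncomputable def pStd (h f : ℕ) (ν ω : Fin h → Bool) : ℝ :=
  if getB ν 1 = false then (if ω = theta 0 ν then 1 else 0)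
  else if ∃ j, 1 ≤ j ∧ j ≤ h ∧ getB ν (j + 1) = false ∧ ω = theta j ν then
    1 / ((f : ℝ) + 1)
  else 0

/-- The set of landing states with exactly `f` zeros. -/
noncomputable def States (h f : ℕ) : Finset (Fin h → Bool) :=
  Finset.univ.filter (fun ν => numZeros ν = f)

/-- The set of TL-states with exactly `f` empty slots. -/
noncomputable def TLStates (h f : ℕ) : Finset (Fin h → Fin (h + 1)) :=
  Finset.univ.filter (fun ν => IsTL h ν ∧ tlZeros ν = f)

/-- Projection from TL-states to landing states. -/
def proj {h : ℕ} (ν : Fin h → Fin (h + 1)) : Fin h → Bool :=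
  fun t => decide ((ν t : ℕ) ≠ 0)

/-- Transition probabilities for the TL-state chain. -/
noncomputable def pHat (h f : ℕ) (μ ν : Fin h → Fin (h + 1)) : ℝ :=
  if getN (h := h) (fun s => (μ s : ℕ)) 1 = 0 then
    (if (fun s => (ν s : ℕ)) = thetaN 0 (fun s => (μ s : ℕ)) then 1 else 0)
  else if ∃ j, 1 ≤ j ∧ j ≤ h ∧ getN (h := h) (fun s => (μ s : ℕ)) (j + 1) = 0 ∧
      (fun s => (ν s : ℕ)) = thetaN j (fun s => (μ s : ℕ)) then
    1 / ((f : ℝ) + 1)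
  else 0

lemma numZeros_cons {h : ℕ} (b : Bool) (ν : Fin h → Bool) :
    numZeros (Fin.cons b ν) = (if b = false then 1 else 0) + numZeros ν := by
  unfold numZeros
  rw [Finset.card_filter, Finset.card_filter, Fin.sum_univ_succ]
  simp [Fin.cons_succ, Fin.cons_zero]

lemma phi_cons_succ {h : ℕ} (b : Bool) (ν : Fin h → Bool) (t : Fin h) :
    phi (Fin.cons b ν) t.succ = phi ν t := by
  unfold phi
  rw [Fin.cons_succ]
  split
  · rw [Finset.card_filter, Finset.card_filter, Fin.sum_univ_succ]
    simp [Fin.cons_succ, Fin.succ_lt_succ_iff]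
  · rfl

lemma phi_cons_zero {h : ℕ} (b : Bool) (ν : Fin h → Bool) :
    phi (Fin.cons b ν) 0 = if b then numZeros ν else 0 := by
  unfold phi numZeros
  rw [Fin.cons_zero]
  cases b with
  | false => simp
  | true =>
    rw [Finset.card_filter, Finset.card_filter, Fin.sum_univ_succ]
    simp [Fin.cons_succ, Fin.succ_pos]

lemma Delta_cons {h : ℕ} (b : Bool) (ν : Fin h → Bool) :
    Delta (Fin.cons b ν) = (if b then 1 + numZeros ν else 1) * Delta ν := by
  unfold Delta
  rw [Fin.prod_univ_succ, phi_cons_zero]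
  simp only [phi_cons_succ]
  cases b <;> simp

lemma desc_key (x f : ℕ) :
    (x - f) * x.descFactorial f + (1 + f) * x.descFactorial f
      = (x + 1) * x.descFactorial f := by
  rcases le_or_gt f x with hfx | hfx
  · rw [← add_mul]; congr 1; omega
  · rw [Nat.descFactorial_eq_zero_iff_lt.mpr hfx]; ring

lemma key_sum (h : ℕ) : ∀ x : ℕ,
    ∑ ν : Fin h → Bool, Nat.descFactorial x (numZeros ν) * Delta ν = (x + 1) ^ h := by
  induction h with
  | zero =>
    intro x
    simp [Delta, numZeros]
  | succ h ih =>
    intro x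
    rw [← Equiv.sum_comp (Fin.consEquiv fun _ : Fin (h + 1) => Bool)]
    rw [Fintype.sum_prod_type]
    show ∑ b : Bool, ∑ ν : Fin h → Bool, Nat.descFactorial x (numZeros (Fin.cons b ν)) * Delta (Fin.cons b ν) = _
    rw [Fintype.sum_bool]
    have step : ∀ ν : Fin h → Bool,
        Nat.descFactorial x (numZeros (Fin.cons true ν)) * Delta (Fin.cons true ν)
        + Nat.descFactorial x (numZeros (Fin.cons false ν)) * Delta (Fin.cons false ν)
        = (x + 1) * (Nat.descFactorial x (numZeros ν) * Delta ν) := by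
      intro ν
      rw [numZeros_cons, numZeros_cons, Delta_cons, Delta_cons]
      norm_num
      rw [add_comm 1 (numZeros ν), Nat.descFactorial_succ]
      calc Nat.descFactorial x (numZeros ν) * ((numZeros ν + 1) * Delta ν)
            + (x - numZeros ν) * Nat.descFactorial x (numZeros ν) * Delta ν
          = ((x - numZeros ν) * Nat.descFactorial x (numZeros ν)
              + (1 + numZeros ν) * Nat.descFactorial x (numZeros ν)) * Delta ν := by ring
        _ = (x + 1) * Nat.descFactorial x (numZeros ν) * Delta ν := by rw [desc_key]
        _ = (x + 1) * (Nat.descFactorial x (numZeros ν) * Delta ν) := by ring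
    rw [← Finset.sum_add_distrib]
    calc (∑ ν : Fin h → Bool,
          (Nat.descFactorial x (numZeros (Fin.cons true ν)) * Delta (Fin.cons true ν)
           + Nat.descFactorial x (numZeros (Fin.cons false ν)) * Delta (Fin.cons false ν)))
        = ∑ ν : Fin h → Bool,
          (x + 1) * (Nat.descFactorial x (numZeros ν) * Delta ν) :=
        Finset.sum_congr rfl fun ν _ => step ν
      _ = (x + 1) ^ (h + 1) := by rw [← Finset.mul_sum, ih x, pow_succ, mul_comm]

theorem stmt4' (h : ℕ) :
    ∑ f ∈ Finset.range (h + 1),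
      (Nat.factorial h / Nat.factorial (h - f)) * ∑ ν ∈ States h f, Delta ν
    = (h + 1) ^ h := by
  have hmem : ∀ ν : Fin h → Bool, numZeros ν ∈ Finset.range (h + 1) := by
    intro ν
    rw [Finset.mem_range, Nat.lt_succ_iff]
    calc numZeros ν ≤ (Finset.univ : Finset (Fin h)).card := Finset.card_filter_le _ _
      _ = h := by simp
  calc ∑ f ∈ Finset.range (h + 1),
        (Nat.factorial h / Nat.factorial (h - f)) * ∑ ν ∈ States h f, Delta ν
      = ∑ f ∈ Finset.range (h + 1), ∑ ν ∈ States h f,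
          Nat.descFactorial h (numZeros ν) * Delta ν := by
        refine Finset.sum_congr rfl fun f hf => ?_
        rw [Finset.mul_sum]
        refine Finset.sum_congr rfl fun ν hν => ?_
        have hνf : numZeros ν = f := (Finset.mem_filter.mp hν).2
        rw [hνf, Nat.descFactorial_eq_div (Nat.lt_succ_iff.mp (Finset.mem_range.mp hf))]
    _ = ∑ ν : Fin h → Bool, Nat.descFactorial h (numZeros ν) * Delta ν :=
        Finset.sum_fiberwise_of_maps_to (fun ν _ => hmem ν) _
    _ = (h + 1) ^ h := key_sum h h

/-- `Σ_f (h!/(h−f)!) Σ_{ν with f zeros} Δ(ν) = (h+1)^h`. -/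
theorem stmt4 (h : ℕ) :
    ∑ f ∈ Finset.range (h + 1),
      (Nat.factorial h / Nat.factorial (h - f)) * ∑ ν ∈ States h f, Delta ν
    = (h + 1) ^ h := by
  exact stmt4' h
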